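/- Let K be a non-archimedean valued field and x_0, r > 0 with corresponding seminorm α(x,r) on K² defined by α(x,r)(a,b) = sup over y ∈ B(x,r) of |a - b·y|. Then α(x,r)(a,b) = max(|a - b·x|, |b|·r); that is, α(x,r) is the diagonalizable seminorm with respect to the basis v₀=(1,0), v₁=(x,1), taking values ρ₀=1 on v₀ and ρ₁=r on v₁. -/

import Mathlib

/-!
The inequality `≤` is the ultrametric inequality applied to
`a - b y = (a - b x) - b (y - x)`. For `≥`, the point `y = x` gives `‖a - b x‖`, and for any
`y = x + c` in the ball the ultrametric inequality applied to `b c = (a - b x) - (a - b y)`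
shows that the supremum is at least `‖b‖ ‖c‖`. Since `C` is algebraically closed and
nontrivially normed, its value group is divisible, hence dense in `ℝ_{>0}`, so `‖c‖` can be
taken arbitrarily close to `r`.
-/

section DenseNorms

variable {C : Type*} [NormedField C] [IsAlgClosed C]

theorem IsAlgClosed.exists_one_lt_norm_lt {θ : C} (hθ : 1 < ‖θ‖) {q : ℝ} (hq : 1 < q) :
    ∃ ζ : C, 1 < ‖ζ‖ ∧ ‖ζ‖ < q := by
  obtain ⟨n, hn⟩ := pow_unbounded_of_one_lt ‖θ‖ hq
  have hn0 : 0 < n := Nat.pos_of_ne_zero fun h => by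
    subst h; linarith [pow_zero q]
  obtain ⟨ζ, rfl⟩ := IsAlgClosed.exists_pow_nat_eq θ hn0
  rw [norm_pow] at hθ hn
  exact ⟨ζ, lt_of_pow_lt_pow_left₀ n (norm_nonneg ζ) (by rwa [one_pow]),
    lt_of_pow_lt_pow_left₀ n (by linarith) hn⟩

theorem IsAlgClosed.exists_norm_mem_Ioo (hC : ∃ θ : C, 1 < ‖θ‖) {t s : ℝ} (hs : 0 < s)
    (hts : t < s) : ∃ c : C, t < ‖c‖ ∧ ‖c‖ < s := by
  wlog ht : 0 < t generalizing t
  · obtain ⟨c, hc, hcs⟩ := this (t := s / 2) (by linarith) (by positivity)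
    exact ⟨c, by linarith, hcs⟩
  obtain ⟨θ, hθ⟩ := hC
  obtain ⟨ζ, hζ1, hζq⟩ := exists_one_lt_norm_lt hθ ((one_lt_div ht).mpr hts)
  obtain ⟨n, hn_le, hn_lt⟩ := exists_mem_Ico_zpow ht hζ1
  refine ⟨ζ ^ (n + 1), by rwa [norm_zpow], ?_⟩
  calc ‖ζ ^ (n + 1)‖ = ‖ζ‖ * ‖ζ‖ ^ n := by
        rw [norm_zpow, zpow_add_one₀ (zero_lt_one.trans hζ1).ne', mul_comm]
    _ ≤ ‖ζ‖ * t := by gcongr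
    _ < s := (lt_div_iff₀ ht).mp hζq

end DenseNorms

section Ultrametric

variable {C : Type*} [NormedField C] [IsUltrametricDist C]

theorem norm_sub_mul_le_of_mem_closedBall {α β z y : C} {r : ℝ}
    (hy : y ∈ Metric.closedBall z r) : ‖α - β * y‖ ≤ max ‖α - β * z‖ (‖β‖ * r) := by
  have hsplit : α - β * y = (α - β * z) + β * (z - y) := by ring
  rw [hsplit]
  refine (IsUltrametricDist.norm_add_le_max _ _).trans (max_le_max le_rfl ?_)
  rw [norm_mul, ← dist_eq_norm, dist_comm]
  exact mul_le_mul_of_nonneg_left hy (norm_nonneg β)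

theorem norm_mul_le_max_norm_sub_mul (α β z c : C) :
    ‖β * c‖ ≤ max ‖α - β * z‖ ‖α - β * (z + c)‖ := by
  have hsplit : β * c = (α - β * z) + -(α - β * (z + c)) := by ring
  rw [hsplit, ← norm_neg (α - β * (z + c))]
  exact IsUltrametricDist.norm_add_le_max _ _

theorem sSup_norm_sub_mul_closedBall [IsAlgClosed C] (hC : ∃ θ : C, 1 < ‖θ‖) (α β z : C)
    {r : ℝ} (hr : 0 < r) :
    sSup {d : ℝ | ∃ y ∈ Metric.closedBall z r, d = ‖α - β * y‖} =
      max ‖α - β * z‖ (‖β‖ * r) := by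
  set S := {d : ℝ | ∃ y ∈ Metric.closedBall z r, d = ‖α - β * y‖}
  have hub : ∀ d ∈ S, d ≤ max ‖α - β * z‖ (‖β‖ * r) := by
    rintro d ⟨y, hy, rfl⟩
    exact norm_sub_mul_le_of_mem_closedBall hy
  have hbdd : BddAbove S := ⟨_, hub⟩
  have hcenter : ‖α - β * z‖ ≤ sSup S :=
    le_csSup hbdd ⟨z, Metric.mem_closedBall_self hr.le, rfl⟩
  refine le_antisymm (csSup_le ⟨_, z, Metric.mem_closedBall_self hr.le, rfl⟩ hub)
    (max_le hcenter (le_of_forall_lt fun t ht => ?_))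
  rcases eq_or_ne β 0 with rfl | hβ
  · linarith [norm_nonneg (α - 0 * z), show t < 0 by simpa using ht]
  have hβ0 : 0 < ‖β‖ := norm_pos_iff.mpr hβ
  obtain ⟨c, htc, hcr⟩ := IsAlgClosed.exists_norm_mem_Ioo hC hr
    ((div_lt_iff₀' hβ0).mpr ht)
  have hshift : z + c ∈ Metric.closedBall z r := by
    simpa [Metric.mem_closedBall, dist_eq_norm] using hcr.le
  calc t < ‖β * c‖ := by rw [norm_mul]; exact (div_lt_iff₀' hβ0).mp htc
    _ ≤ max ‖α - β * z‖ ‖α - β * (z + c)‖ := norm_mul_le_max_norm_sub_mul α β z c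
    _ ≤ sSup S := max_le hcenter (le_csSup hbdd ⟨z + c, hshift, rfl⟩)

end Ultrametric

theorem stmt1_general (K C : Type*) [NormedField K] [NormedField C]
    [IsUltrametricDist C]
    [IsAlgClosed C] [Algebra K C]
    (hext : ∀ a : K, ‖algebraMap K C a‖ = ‖a‖)
    (hnt : ∃ a : K, a ≠ 0 ∧ ‖a‖ ≠ 1)
    (x : K) (r : ℝ) (hr : 0 < r) (a b : K) :
    sSup {d : ℝ | ∃ y ∈ Metric.closedBall (algebraMap K C x) r,
        d = ‖algebraMap K C a - algebraMap K C b * y‖} = max ‖a - b * x‖ (‖b‖ * r) := by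
  let := NontriviallyNormedField.ofNormNeOne hnt
  obtain ⟨w, hw⟩ := NormedField.exists_one_lt_norm K
  have hC : ∃ θ : C, 1 < ‖θ‖ := ⟨algebraMap K C w, by rwa [hext]⟩
  rw [sSup_norm_sub_mul_closedBall hC _ _ _ hr, ← map_mul, ← map_sub, hext, hext]

/-- The seminorm `α(x,r)` on `K²`, given on `(a,b)` by the supremum of `‖a - b·y‖` over the
closed ball `B(x,r)` (taken in a complete algebraically closed non-archimedean extension `C`),
equals the diagonalizable seminorm `max ‖a - b·x‖ (‖b‖·r)` with respect to the basis
`v₀ = (1,0)`, `v₁ = (x,1)` with values `ρ₀ = 1`, `ρ₁ = r`. -/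
theorem stmt1 (K C : Type*) [NormedField K] [NormedField C]
    [CompleteSpace K] [CompleteSpace C] [IsUltrametricDist K] [IsUltrametricDist C]
    [IsAlgClosed C] [Algebra K C]
    (hext : ∀ a : K, ‖algebraMap K C a‖ = ‖a‖)
    (hnt : ∃ a : K, a ≠ 0 ∧ ‖a‖ ≠ 1)
    (x : K) (r : ℝ) (hr : 0 < r) (a b : K) :
    sSup {d : ℝ | ∃ y ∈ Metric.closedBall (algebraMap K C x) r,
        d = ‖algebraMap K C a - algebraMap K C b * y‖} = max ‖a - b * x‖ (‖b‖ * r) :=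
  stmt1_general K C hext hnt x r hr a b
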